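/- Let A, B be commutative unital K-algebras, Δ : A → A and Δ′ : B → B K-linear with Δ(1)=0 and Δ′(1)=0, and f : A → B K-linear with f(1)=1. If f∘Δ = Δ′∘f, then for every n ≥ 1 and all a_1,…,a_n ∈ A: Σ_{i=1}^{n} Σ_{S⊆{1,…,n},|S|=i} κ(f)_{n−i+1}(K(Δ)_i((a_s)_{s∈S}), (a_j)_{j∉S}) = Σ K(Δ′)_k(κ(f)_{|I_1|}((a_i)_{i∈I_1}),…,κ(f)_{|I_k|}((a_i)_{i∈I_k})), where the right-hand sum runs over all partitions {I_1,…,I_k} of {1,…,n} into nonempty blocks. (This is the Taylor-coefficient form of κ(f)∘K(Δ) = K(Δ′)∘κ(f).) -/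

import Mathlib

open Finset

/-- The `n`-th Koszul bracket of an operator `D` on a commutative ring. -/
noncomputable def koszul {R : Type*} [CommRing R] (D : R → R) (n : ℕ) (a : Fin n → R) : R :=
  ∑ s ∈ (Finset.univ : Finset (Fin n)).powerset.filter fun s => s.Nonempty,
    (-1 : ℤ) ^ (n - s.card) • (D (∏ i ∈ s, a i) * ∏ i ∈ sᶜ, a i)

/-- The set of partitions of `{0,…,n-1}` into nonempty, pairwise disjoint blocks. -/
def partitionsOf (n : ℕ) : Finset (Finset (Finset (Fin n))) :=
  ((Finset.univ : Finset (Fin n)).powerset.powerset).filter fun P =>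
    (∀ s ∈ P, s.Nonempty) ∧ (∀ s ∈ P, ∀ t ∈ P, s ≠ t → s ∩ t = ∅) ∧ P.sup id = Finset.univ

/-- The `n`-th cumulant of a map `f` between commutative rings. -/
noncomputable def cumul {R S : Type*} [CommRing R] [CommRing S]
    (f : R → S) (n : ℕ) (a : Fin n → R) : S :=
  ∑ P ∈ partitionsOf n,
    ((-1 : ℤ) ^ (P.card - 1) * ((P.card - 1).factorial : ℤ)) • ∏ s ∈ P, f (∏ i ∈ s, a i)

/-- Restriction of a family `a` to a finite subset `s` of its index set. -/
noncomputable def restr {α β : Type*} (a : α → β) (s : Finset α) : Fin s.card → β :=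
  fun i => a (s.equivFin.symm i).1

/-!
Write `F s = f (∏ i ∈ s, a i)` for the moments and `κ` for the cumulants, and let set functions
multiply by subset convolution `(φ ⋆ ψ) Y = ∑ W ⊆ Y, φ W * ψ (Y \ W)`. Splitting off the block
that contains the first argument shows that `κ(f)` with one distinguished entry `b` is
`(U ↦ f (b * a_U)) ⋆ F⁻¹`, where `F⁻¹ Y = ∑_P (-1)^|P| |P|! ∏ F` is the convolution inverse of `F`.
Expanding `K(Δ)` and summing `(-1)^|X|` over the entries `X` that are multiplied back in leaves
`∑_{V ≠ ∅} f (Δ a_V) * F⁻¹ Vᶜ` on the left. On the right, the moment–cumulant formula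
`F = ∑_P ∏ κ` and the identity `∑_P (-1)^|P| ∏ κ = F⁻¹` (both are convolution inverses of `F`)
turn the sum of `K(Δ')(κ, …, κ)` into `∑_{W ≠ ∅} Δ' (F W) * F⁻¹ Wᶜ`, which is the left side
because `f ∘ Δ = Δ' ∘ f`.
-/

section SetPartitions

variable {γ : Type*} [DecidableEq γ]

def setPartitions (V : Finset γ) : Finset (Finset (Finset γ)) :=
  V.powerset.powerset.filter fun P =>
    (∀ s ∈ P, s.Nonempty) ∧ (∀ s ∈ P, ∀ t ∈ P, s ≠ t → s ∩ t = ∅) ∧ P.sup id = V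

theorem partitionsOf_eq_setPartitions (n : ℕ) : partitionsOf n = setPartitions univ := by
  unfold partitionsOf setPartitions
  congr

theorem mem_setPartitions {V : Finset γ} {P : Finset (Finset γ)} :
    P ∈ setPartitions V ↔
      (∀ s ∈ P, s.Nonempty) ∧ (∀ s ∈ P, ∀ t ∈ P, s ≠ t → s ∩ t = ∅) ∧ P.sup id = V := by
  refine ⟨fun h => (mem_filter.1 h).2, fun h => mem_filter.2 ⟨mem_powerset.2 fun s hs => ?_, h⟩⟩
  rw [mem_powerset, ← h.2.2]
  exact le_sup (f := id) hs

variable {V Y : Finset γ} {P Q R : Finset (Finset γ)} {s t : Finset γ}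

theorem subset_of_mem_setPartitions (hP : P ∈ setPartitions V) (hs : s ∈ P) : s ⊆ V :=
  (mem_setPartitions.1 hP).2.2 ▸ le_sup (f := id) hs

theorem eq_of_mem_setPartitions (hP : P ∈ setPartitions V) (hs : s ∈ P) (ht : t ∈ P) {x : γ}
    (hxs : x ∈ s) (hxt : x ∈ t) : s = t := by
  by_contra hst
  have hempty := (mem_setPartitions.1 hP).2.1 s hs t ht hst
  exact notMem_empty x (hempty ▸ mem_inter.2 ⟨hxs, hxt⟩)

theorem exists_mem_of_mem_setPartitions (hP : P ∈ setPartitions V) {x : γ} (hx : x ∈ V) :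
    ∃ s ∈ P, x ∈ s := by
  rw [← (mem_setPartitions.1 hP).2.2] at hx
  simpa using hx

theorem setPartitions_empty : setPartitions (∅ : Finset γ) = {∅} := by
  ext P
  refine ⟨fun hP => ?_, fun hP => ?_⟩
  · rw [mem_singleton, eq_empty_iff_forall_notMem]
    intro s hs
    obtain ⟨x, hx⟩ := (mem_setPartitions.1 hP).1 s hs
    exact notMem_empty x (subset_of_mem_setPartitions hP hs hx)
  · simp [mem_singleton.1 hP, mem_setPartitions]

theorem nonempty_of_mem_setPartitions (hV : V.Nonempty) (hP : P ∈ setPartitions V) :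
    P.Nonempty := by
  obtain ⟨x, hx⟩ := hV
  obtain ⟨s, hs, -⟩ := exists_mem_of_mem_setPartitions hP hx
  exact ⟨s, hs⟩

theorem singleton_mem_setPartitions (hV : V.Nonempty) : {V} ∈ setPartitions V := by
  simp [mem_setPartitions, hV]

theorem notMem_of_mem_setPartitions {x : γ} (hQ : Q ∈ setPartitions Y) (hxV : x ∈ V)
    (hxY : x ∉ Y) : V ∉ Q :=
  fun hVQ => hxY (subset_of_mem_setPartitions hQ hVQ hxV)

theorem empty_mem_setPartitions_iff : ∅ ∈ setPartitions V ↔ V = ∅ := by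
  simp [mem_setPartitions, eq_comm]

theorem disjoint_of_mem_setPartitions_sdiff (hR : R ∈ setPartitions V)
    (hQ : Q ∈ setPartitions (Y \ V)) : Disjoint R Q := by
  refine disjoint_left.2 fun s hsR hsQ => ?_
  obtain ⟨x, hx⟩ := (mem_setPartitions.1 hR).1 s hsR
  exact (mem_sdiff.1 (subset_of_mem_setPartitions hQ hsQ hx)).2
    (subset_of_mem_setPartitions hR hsR hx)

theorem union_mem_setPartitions (hV : V ⊆ Y) (hR : R ∈ setPartitions V)
    (hQ : Q ∈ setPartitions (Y \ V)) : R ∪ Q ∈ setPartitions Y := by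
  obtain ⟨hR₁, hR₂, hR₃⟩ := mem_setPartitions.1 hR
  obtain ⟨hQ₁, hQ₂, hQ₃⟩ := mem_setPartitions.1 hQ
  have hRQ : ∀ s ∈ R, ∀ t ∈ Q, s ∩ t = ∅ := fun s hs t ht =>
    disjoint_iff_inter_eq_empty.1 <| disjoint_of_subset_left (subset_of_mem_setPartitions hR hs)
      (disjoint_of_subset_right (subset_of_mem_setPartitions hQ ht) disjoint_sdiff)
  refine mem_setPartitions.2 ⟨?_, ?_, ?_⟩
  · rintro s hs
    rcases mem_union.1 hs with hs | hs
    exacts [hR₁ s hs, hQ₁ s hs]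
  · intro s hs t ht hst
    rcases mem_union.1 hs with hs | hs <;> rcases mem_union.1 ht with ht | ht
    · exact hR₂ s hs t ht hst
    · exact hRQ s hs t ht
    · rw [inter_comm]; exact hRQ t ht s hs
    · exact hQ₂ s hs t ht hst
  · rw [sup_union, hR₃, hQ₃, sup_eq_union, union_sdiff_of_subset hV]

theorem sdiff_mem_setPartitions (hP : P ∈ setPartitions Y) (hR : R ⊆ P) :
    P \ R ∈ setPartitions (Y \ R.sup id) := by
  obtain ⟨h₁, h₂, h₃⟩ := mem_setPartitions.1 hP
  refine mem_setPartitions.2 ⟨fun s hs => h₁ s (mem_sdiff.1 hs).1,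
    fun s hs t ht => h₂ s (mem_sdiff.1 hs).1 t (mem_sdiff.1 ht).1, ?_⟩
  ext x
  simp only [mem_sup, mem_sdiff, id, not_exists, not_and]
  constructor
  · rintro ⟨s, ⟨hsP, hsR⟩, hxs⟩
    refine ⟨subset_of_mem_setPartitions hP hsP hxs, fun t htR hxt => hsR ?_⟩
    rwa [eq_of_mem_setPartitions hP hsP (hR htR) hxs hxt]
  · rintro ⟨hxY, hxR⟩
    obtain ⟨s, hsP, hxs⟩ := exists_mem_of_mem_setPartitions hP hxY
    exact ⟨s, ⟨hsP, fun hsR => hxR s hsR hxs⟩, hxs⟩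

end SetPartitions

section SetPartitionSums

variable {γ : Type*} [DecidableEq γ] {M : Type*} [AddCommMonoid M]

theorem sum_setPartitions_sum_powerset (Y : Finset γ)
    (g : Finset (Finset γ) → Finset (Finset γ) → M) :
    ∑ P ∈ setPartitions Y, ∑ R ∈ P.powerset, g R (P \ R) =
      ∑ W ∈ Y.powerset, ∑ R ∈ setPartitions W, ∑ Q ∈ setPartitions (Y \ W), g R Q := by
  simp_rw [← sum_product']
  rw [sum_sigma', sum_sigma']
  refine sum_nbij' (fun p => ⟨p.2.sup id, p.2, p.1 \ p.2⟩) (fun p => ⟨p.2.1 ∪ p.2.2, p.2.1⟩)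
    ?_ ?_ ?_ ?_ fun _ _ => rfl
  · rintro ⟨P, R⟩ h
    simp only [mem_sigma, mem_powerset, mem_product] at h ⊢
    obtain ⟨h₁, h₂, h₃⟩ := mem_setPartitions.1 h.1
    refine ⟨h₃ ▸ sup_mono h.2, ?_, sdiff_mem_setPartitions h.1 h.2⟩
    exact mem_setPartitions.2 ⟨fun s hs => h₁ s (h.2 hs),
      fun s hs t ht => h₂ s (h.2 hs) t (h.2 ht), rfl⟩
  · rintro ⟨W, R, Q⟩ h
    simp only [mem_sigma, mem_powerset, mem_product] at h ⊢
    exact ⟨union_mem_setPartitions h.1 h.2.1 h.2.2, subset_union_left⟩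
  · rintro ⟨P, R⟩ h
    simp only [mem_sigma, mem_powerset] at h
    simp [union_sdiff_of_subset h.2]
  · rintro ⟨W, R, Q⟩ h
    simp only [mem_sigma, mem_powerset, mem_product] at h
    simp [(mem_setPartitions.1 h.2.1).2.2,
      union_sdiff_cancel_left (disjoint_of_mem_setPartitions_sdiff h.2.1 h.2.2)]

theorem sum_setPartitions_sum_mem (Y : Finset γ) (g : Finset (Finset γ) → Finset γ → M) :
    ∑ P ∈ setPartitions Y, ∑ V ∈ P, g P V =
      ∑ V ∈ Y.powerset with V.Nonempty, ∑ Q ∈ setPartitions (Y \ V), g (insert V Q) V := by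
  rw [sum_sigma', sum_sigma']
  refine sum_nbij' (fun p => ⟨p.2, p.1.erase p.2⟩) (fun p => ⟨insert p.1 p.2, p.1⟩)
    ?_ ?_ ?_ ?_ ?_
  · rintro ⟨P, V⟩ h
    simp only [mem_sigma, mem_filter, mem_powerset] at h ⊢
    refine ⟨⟨subset_of_mem_setPartitions h.1 h.2, (mem_setPartitions.1 h.1).1 V h.2⟩, ?_⟩
    simpa [erase_eq] using sdiff_mem_setPartitions h.1 (singleton_subset_iff.2 h.2)
  · rintro ⟨V, Q⟩ h
    simp only [mem_sigma, mem_filter, mem_powerset] at h ⊢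
    rw [insert_eq]
    exact ⟨union_mem_setPartitions h.1.1 (singleton_mem_setPartitions h.1.2) h.2,
      mem_union_left _ (mem_singleton_self V)⟩
  · rintro ⟨P, V⟩ h
    simp only [mem_sigma] at h
    simp [insert_erase h.2]
  · rintro ⟨V, Q⟩ h
    simp only [mem_sigma, mem_filter, mem_powerset] at h
    have hVQ : V ∉ Q := disjoint_singleton_left.1 <|
      disjoint_of_mem_setPartitions_sdiff (singleton_mem_setPartitions h.1.2) h.2
    simp [erase_insert hVQ]
  · rintro ⟨P, V⟩ h
    simp only [mem_sigma] at h
    simp [insert_erase h.2]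

theorem sum_setPartitions_insert {x : γ} {T : Finset γ} (hx : x ∉ T)
    (g : Finset (Finset γ) → M) :
    ∑ P ∈ setPartitions (insert x T), g P =
      ∑ U ∈ T.powerset, ∑ Q ∈ setPartitions (T \ U), g (insert (insert x U) Q) := by
  have hblock : ∀ P ∈ setPartitions (insert x T), ∑ V ∈ P, (if x ∈ V then g P else 0) = g P := by
    intro P hP
    obtain ⟨V₀, hV₀, hxV₀⟩ := exists_mem_of_mem_setPartitions hP (mem_insert_self x T)
    rw [sum_eq_single_of_mem V₀ hV₀ fun V hV hne =>
      if_neg fun hxV => hne (eq_of_mem_setPartitions hP hV hV₀ hxV hxV₀), if_pos hxV₀]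
  rw [← sum_congr rfl hblock, sum_setPartitions_sum_mem, sum_filter, sum_powerset_insert hx,
    sum_eq_zero fun V hV => ?_, zero_add]
  · refine sum_congr rfl fun U hU => ?_
    simp [insert_sdiff_insert, sdiff_insert_of_notMem hx]
  · have hxV : x ∉ V := fun h => hx (mem_powerset.1 hV h)
    simp [hxV]

end SetPartitionSums

theorem Finset.powerset_map {γ δ : Type*} (e : γ ↪ δ) (s : Finset γ) :
    (s.map e).powerset = s.powerset.map (mapEmbedding e).toEmbedding := by
  ext t
  simp [subset_map_iff, eq_comm]

section Map

variable {γ δ : Type*} [DecidableEq γ] [DecidableEq δ] (e : γ ↪ δ)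

theorem map_mem_setPartitions_map_iff {V : Finset γ} {Q : Finset (Finset γ)} :
    Q.map (mapEmbedding e).toEmbedding ∈ setPartitions (V.map e) ↔ Q ∈ setPartitions V := by
  have hsup : Q.sup (mapEmbedding e) = (Q.sup id).map e :=
    (apply_sup_eq_sup_comp (map e) (fun _ _ => map_union _ _) (map_empty e)).symm
  simp [mem_setPartitions, sup_map, hsup, ← map_inter]

theorem sum_setPartitions_map {M : Type*} [AddCommMonoid M] (V : Finset γ)
    (g : Finset (Finset δ) → M) :
    ∑ P ∈ setPartitions (V.map e), g P =
      ∑ Q ∈ setPartitions V, g (Q.map (mapEmbedding e).toEmbedding) := by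
  refine (sum_bij (fun Q _ => Q.map (mapEmbedding e).toEmbedding)
    (fun Q hQ => (map_mem_setPartitions_map_iff e).2 hQ)
    (fun _ _ _ _ => (map_injective _).eq_iff.1)
    (fun P hP => ?_) fun _ _ => rfl).symm
  have hsub : P ⊆ V.powerset.map (mapEmbedding e).toEmbedding :=
    powerset_map e V ▸ fun s hs => mem_powerset.2 (subset_of_mem_setPartitions hP hs)
  obtain ⟨Q, -, rfl⟩ := subset_map_iff.1 hsub
  exact ⟨Q, (map_mem_setPartitions_map_iff e).1 hP, rfl⟩

end Map

section Convolution

variable {γ : Type*} [DecidableEq γ] {S : Type*} [CommRing S] {M : Type*} [AddCommMonoid M]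

theorem sum_powerset_sum_powerset_sdiff (Y : Finset γ) (g : Finset γ → Finset γ → M) :
    ∑ U ∈ Y.powerset, ∑ V ∈ (Y \ U).powerset, g U V =
      ∑ W ∈ Y.powerset, ∑ U ∈ W.powerset, g U (W \ U) := by
  rw [sum_sigma', sum_sigma']
  refine sum_nbij' (fun p => ⟨p.1 ∪ p.2, p.1⟩) (fun p => ⟨p.2, p.1 \ p.2⟩) ?_ ?_ ?_ ?_ ?_
  · rintro ⟨U, V⟩ h
    simp only [mem_sigma, mem_powerset, subset_sdiff] at h ⊢
    exact ⟨union_subset h.1 h.2.1, subset_union_left⟩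
  · rintro ⟨W, U⟩ h
    simp only [mem_sigma, mem_powerset] at h ⊢
    exact ⟨h.2.trans h.1, sdiff_subset_sdiff h.1 subset_rfl⟩
  · rintro ⟨U, V⟩ h
    simp only [mem_sigma, mem_powerset, subset_sdiff] at h
    simp [union_sdiff_cancel_left h.2.2.symm]
  · rintro ⟨W, U⟩ h
    simp only [mem_sigma, mem_powerset] at h
    simp [union_sdiff_of_subset h.2]
  · rintro ⟨U, V⟩ h
    simp only [mem_sigma, mem_powerset, subset_sdiff] at h
    simp [union_sdiff_cancel_left h.2.2.symm]

theorem sum_powerset_neg_one_pow_smul (Y : Finset γ) {G : Type*} [AddCommGroup G]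
    (h : Finset γ → Finset γ → G) :
    ∑ X ∈ Y.powerset, ∑ U ∈ (Y \ X).powerset, (-1 : ℤ) ^ X.card • h (X ∪ U) ((Y \ X) \ U) =
      h ∅ Y := by
  rw [sum_powerset_sum_powerset_sdiff, sum_eq_single_of_mem ∅ (empty_mem_powerset Y)]
  · simp
  · intro W hW hW₀
    rw [sum_congr rfl fun X hX => by rw [union_sdiff_of_subset (mem_powerset.1 hX),
      sdiff_sdiff_sdiff_cancel_right (mem_powerset.1 hX)], ← sum_smul,
      sum_powerset_neg_one_pow_card_of_nonempty (nonempty_iff_ne_empty.2 hW₀), zero_smul]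

def setConv (φ ψ : Finset γ → S) (Y : Finset γ) : S :=
  ∑ W ∈ Y.powerset, φ W * ψ (Y \ W)

theorem setConv_map {δ : Type*} [DecidableEq δ] (e : γ ↪ δ) (φ ψ : Finset δ → S)
    (Y : Finset γ) :
    setConv φ ψ (Y.map e) = setConv (fun U => φ (U.map e)) (fun U => ψ (U.map e)) Y := by
  simp [setConv, powerset_map, Finset.map_sdiff]

variable (φ ψ χ : Finset γ → S)

theorem setConv_comm : setConv φ ψ = setConv ψ φ := by
  funext Y
  refine sum_nbij' (Y \ ·) (Y \ ·) ?_ ?_ ?_ ?_ ?_ <;> intro W hW <;>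
    simp only [mem_powerset] at hW
  · exact mem_powerset.2 sdiff_subset
  · exact mem_powerset.2 sdiff_subset
  · exact Finset.sdiff_sdiff_eq_self hW
  · exact Finset.sdiff_sdiff_eq_self hW
  · rw [Finset.sdiff_sdiff_eq_self hW, mul_comm]

theorem setConv_assoc : setConv (setConv φ ψ) χ = setConv φ (setConv ψ χ) := by
  funext Y
  simp only [setConv, sum_mul, mul_sum]
  rw [sum_powerset_sum_powerset_sdiff]
  refine sum_congr rfl fun W hW => sum_congr rfl fun U hU => ?_
  rw [sdiff_sdiff_sdiff_cancel_right (mem_powerset.1 hU), mul_assoc]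

theorem setConv_single_empty : setConv φ (Pi.single ∅ 1) = φ := by
  funext Y
  rw [setConv, sum_eq_single_of_mem Y (mem_powerset_self Y), Finset.sdiff_self, Pi.single_eq_same,
    mul_one]
  intro W hW hWY
  rw [Pi.single_eq_of_ne (sdiff_eq_empty_iff_subset.not.2 fun h => hWY
    (subset_antisymm (mem_powerset.1 hW) h)), mul_zero]

theorem setConv_congr {φ' ψ' : Finset γ → S} {Y : Finset γ} (hφ : ∀ U ⊆ Y, φ U = φ' U)
    (hψ : ∀ U ⊆ Y, ψ U = ψ' U) : setConv φ ψ Y = setConv φ' ψ' Y :=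
  sum_congr rfl fun W hW => by rw [hφ W (mem_powerset.1 hW), hψ _ sdiff_subset]

end Convolution

section PartitionSum

variable {γ : Type*} [DecidableEq γ] {S : Type*} [CommRing S]

def partitionSum (w : ℕ → ℤ) (φ : Finset γ → S) (V : Finset γ) : S :=
  ∑ P ∈ setPartitions V, w P.card • ∏ s ∈ P, φ s

def signedFactorial (k : ℕ) : ℤ := (-1) ^ k * k.factorial

theorem partitionSum_map (w : ℕ → ℤ) {δ : Type*} [DecidableEq δ] (e : γ ↪ δ)
    (φ : Finset δ → S) (V : Finset γ) :
    partitionSum w φ (V.map e) = partitionSum w (fun s => φ (s.map e)) V := by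
  simp [partitionSum, sum_setPartitions_map]

variable (w : ℕ → ℤ) (φ : Finset γ → S)

theorem partitionSum_empty : partitionSum w φ ∅ = w 0 • 1 := by
  simp [partitionSum, setPartitions_empty]

theorem partitionSum_insert {x : γ} {T : Finset γ} (hx : x ∉ T) :
    partitionSum w φ (insert x T) =
      setConv (fun U => φ (insert x U)) (partitionSum (fun k => w (k + 1)) φ) T := by
  rw [partitionSum, sum_setPartitions_insert hx]
  refine sum_congr rfl fun U _ => ?_
  rw [partitionSum, mul_sum]
  refine sum_congr rfl fun Q hQ => ?_
  have hxQ : insert x U ∉ Q :=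
    notMem_of_mem_setPartitions hQ (mem_insert_self x U) fun h => hx (mem_sdiff.1 h).1
  rw [card_insert_of_notMem hxQ, prod_insert hxQ, mul_smul_comm]

theorem partitionSum_card_mul (Y : Finset γ) :
    partitionSum (fun k => k * w k) φ Y =
      ∑ V ∈ Y.powerset with V.Nonempty, φ V * partitionSum (fun k => w (k + 1)) φ (Y \ V) := by
  have hcount : ∀ P ∈ setPartitions Y,
      ((P.card : ℤ) * w P.card) • ∏ s ∈ P, φ s = ∑ V ∈ P, w P.card • ∏ s ∈ P, φ s := by
    intro P _
    rw [sum_const, mul_smul, natCast_zsmul]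
  rw [partitionSum, sum_congr rfl hcount, sum_setPartitions_sum_mem]
  refine sum_congr rfl fun V hV => ?_
  rw [partitionSum, mul_sum]
  refine sum_congr rfl fun Q hQ => ?_
  obtain ⟨x, hx⟩ := (mem_filter.1 hV).2
  have hVQ : V ∉ Q := notMem_of_mem_setPartitions hQ hx fun h => (mem_sdiff.1 h).2 hx
  rw [card_insert_of_notMem hVQ, prod_insert hVQ, mul_smul_comm]

end PartitionSum

section MomentCumulant

variable {γ : Type*} [DecidableEq γ] {S : Type*} [CommRing S]

theorem sum_powerset_eq_add_sum_nonempty {M : Type*} [AddCommMonoid M] (Y : Finset γ)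
    (g : Finset γ → M) :
    ∑ W ∈ Y.powerset, g W = g ∅ + ∑ W ∈ Y.powerset with W.Nonempty, g W := by
  rw [← sum_filter_not_add_sum_filter _ (·.Nonempty)]
  simp [not_nonempty_iff_eq_empty, filter_eq']

theorem setConv_partitionSum_signedFactorial {F : Finset γ → S} (hF : F ∅ = 1) :
    setConv F (partitionSum signedFactorial F) = Pi.single ∅ 1 := by
  funext Y
  rcases Y.eq_empty_or_nonempty with rfl | hY
  · simp [setConv, partitionSum_empty, hF, signedFactorial]
  have hrec : partitionSum signedFactorial F Y =
      -∑ V ∈ Y.powerset with V.Nonempty, F V * partitionSum signedFactorial F (Y \ V) := by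
    -- distinguish one block of each partition: `k ! = k * (k - 1)!`
    calc partitionSum signedFactorial F Y
        = partitionSum (fun k => k * ((-1) ^ k * (k - 1).factorial)) F Y := by
          refine sum_congr rfl fun P hP => ?_
          obtain ⟨m, hm⟩ := Nat.exists_eq_add_one_of_ne_zero
            (card_pos.2 (nonempty_of_mem_setPartitions hY hP)).ne'
          simp only [hm, signedFactorial, Nat.factorial_succ, Nat.add_sub_cancel]
          push_cast
          ring_nf
      _ = ∑ V ∈ Y.powerset with V.Nonempty,
            F V * partitionSum (fun k => -signedFactorial k) F (Y \ V) := by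
          rw [partitionSum_card_mul]
          simp only [signedFactorial, Nat.add_sub_cancel, pow_succ]
          ring_nf
      _ = _ := by simp [partitionSum, neg_smul, sum_neg_distrib]
  rw [setConv, sum_powerset_eq_add_sum_nonempty, hF, one_mul, sdiff_empty, hrec, neg_add_cancel,
    Pi.single_eq_of_ne hY.ne_empty]

def cumulant (F : Finset γ → S) : Finset γ → S :=
  partitionSum (fun k => signedFactorial (k - 1)) F

theorem cumulant_insert (F : Finset γ → S) {x : γ} {U : Finset γ} (hx : x ∉ U) :
    cumulant F (insert x U) =
      setConv (fun U => F (insert x U)) (partitionSum signedFactorial F) U := by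
  rw [cumulant, partitionSum_insert _ _ hx]
  simp only [Nat.add_sub_cancel]

theorem partitionSum_one_cumulant {F : Finset γ → S} (hF : F ∅ = 1) :
    partitionSum (fun _ => 1) (cumulant F) = F := by
  funext V
  induction V using Finset.strongInduction with
  | H V ih =>
  rcases V.eq_empty_or_nonempty with rfl | ⟨x, hx⟩
  · simp [partitionSum_empty, hF]
  have hxT : x ∉ V.erase x := notMem_erase x V
  have hcumulant : ∀ U ⊆ V.erase x, cumulant F (insert x U) =
      setConv (fun U => F (insert x U)) (partitionSum signedFactorial F) U :=
    fun U hU => cumulant_insert F fun h => hxT (hU h)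
  have hmoment : ∀ U ⊆ V.erase x, partitionSum (fun _ => 1) (cumulant F) U = F U :=
    fun U hU => ih U (hU.trans_ssubset (erase_ssubset hx))
  rw [← insert_erase hx, partitionSum_insert _ _ hxT, setConv_congr _ _ hcumulant hmoment,
    setConv_assoc, setConv_comm (partitionSum _ F), setConv_partitionSum_signedFactorial hF,
    setConv_single_empty]

theorem setConv_partitionSum_neg_one_pow (φ : Finset γ → S) :
    setConv (partitionSum (fun k => (-1) ^ k) φ) (partitionSum (fun _ => 1) φ) = Pi.single ∅ 1 := by
  funext Y
  have hsplit : ∀ P ∈ setPartitions Y,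
      ∑ R ∈ P.powerset, (-1 : ℤ) ^ R.card • ((∏ s ∈ R, φ s) * ∏ s ∈ P \ R, φ s) =
        (if P = ∅ then 1 else 0 : ℤ) • ∏ s ∈ P, φ s := fun P _ => by
    rw [← sum_powerset_neg_one_pow_card, sum_smul]
    exact sum_congr rfl fun R hR => by rw [mul_comm, prod_sdiff (mem_powerset.1 hR)]
  simp only [setConv, partitionSum, one_smul, sum_mul_sum, smul_mul_assoc]
  rw [← sum_setPartitions_sum_powerset Y fun R Q =>
    (-1 : ℤ) ^ R.card • ((∏ s ∈ R, φ s) * ∏ s ∈ Q, φ s), sum_congr rfl hsplit]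
  simp [ite_smul, empty_mem_setPartitions_iff, Pi.single_apply]

theorem partitionSum_neg_one_pow_cumulant {F : Finset γ → S} (hF : F ∅ = 1) :
    partitionSum (fun k => (-1) ^ k) (cumulant F) = partitionSum signedFactorial F := by
  set N := partitionSum (fun k => (-1) ^ k) (cumulant F)
  calc N = setConv N (setConv F (partitionSum signedFactorial F)) := by
        rw [setConv_partitionSum_signedFactorial hF, setConv_single_empty]
    _ = partitionSum signedFactorial F := by
        rw [← setConv_assoc, ← partitionSum_one_cumulant hF, setConv_partitionSum_neg_one_pow,
          setConv_comm, setConv_single_empty]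

end MomentCumulant

def moment {γ R S : Type*} [CommMonoid R] (f : R → S) (c : γ → R) (s : Finset γ) : S :=
  f (∏ i ∈ s, c i)

theorem moment_map {γ δ R S : Type*} [CommMonoid R] (e : γ ↪ δ) (f : R → S) (c : δ → R)
    (s : Finset γ) : moment f c (s.map e) = moment f (fun i => c (e i)) s := by
  simp [moment]

theorem map_univ_equivFin_symm {γ : Type*} (s : Finset γ) :
    univ.map (s.equivFin.symm.toEmbedding.trans (Function.Embedding.subtype (· ∈ s))) = s := by
  ext x
  simp only [mem_map, mem_univ, true_and, Function.Embedding.trans_apply,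
    Equiv.coe_toEmbedding, Function.Embedding.coe_subtype]
  exact ⟨by rintro ⟨i, rfl⟩; exact (s.equivFin.symm i).2, fun h => ⟨s.equivFin ⟨x, h⟩, by simp⟩⟩

section FiniteFamilies

variable {γ : Type*} [DecidableEq γ] {R S : Type*} [CommRing R] [CommRing S]

def koszulOn (D : R → R) (c : γ → R) (s : Finset γ) : R :=
  ∑ t ∈ s.powerset with t.Nonempty,
    (-1 : ℤ) ^ (s.card - t.card) • (D (∏ i ∈ t, c i) * ∏ i ∈ s \ t, c i)

theorem koszul_eq_koszulOn (D : R → R) {n : ℕ} (a : Fin n → R) :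
    koszul D n a = koszulOn D a univ := by
  simp [koszul, koszulOn, compl_eq_univ_sdiff]

theorem cumul_eq_cumulant (f : R → S) {n : ℕ} (a : Fin n → R) :
    cumul f n a = cumulant (moment f a) univ := by
  rw [cumul, partitionsOf_eq_setPartitions]
  rfl

theorem koszulOn_map {δ : Type*} [DecidableEq δ] (e : γ ↪ δ) (D : R → R) (c : δ → R)
    (s : Finset γ) :
    koszulOn D c (s.map e) = koszulOn D (fun i => c (e i)) s := by
  simp [koszulOn, powerset_map, filter_map, ← Finset.map_sdiff, Function.comp_def]

theorem koszul_restr (D : R → R) (c : γ → R) (s : Finset γ) :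
    koszul D s.card (restr c s) = koszulOn D c s := by
  conv_rhs => rw [← map_univ_equivFin_symm s]
  rw [koszul_eq_koszulOn, koszulOn_map]
  rfl

theorem cumul_restr (f : R → S) (c : γ → R) (s : Finset γ) :
    cumul f s.card (restr c s) = cumulant (moment f c) s := by
  conv_rhs => rw [← map_univ_equivFin_symm s]
  rw [cumul_eq_cumulant, cumulant, cumulant, partitionSum_map]
  simp only [moment_map]
  rfl

theorem cumul_cons (f : R → S) (b : R) {m : ℕ} (x : Fin m → R) :
    cumul f (m + 1) (Fin.cons b x) =
      setConv (fun U => f (b * ∏ i ∈ U, x i)) (partitionSum signedFactorial (moment f x)) univ := by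
  rw [cumul_eq_cumulant, Fin.univ_succ, cons_eq_insert, cumulant_insert _ (by simp), setConv_map]
  simp [moment, partitionSum_map, prod_map]
  rfl

theorem cumul_cons_restr (f : R → S) (b : R) (c : γ → R) (s : Finset γ) :
    cumul f (s.card + 1) (Fin.cons b (restr c s)) =
      setConv (fun U => f (b * ∏ i ∈ U, c i)) (partitionSum signedFactorial (moment f c)) s := by
  conv_rhs => rw [← map_univ_equivFin_symm s]
  rw [cumul_cons, setConv_map]
  simp only [partitionSum_map, moment_map, prod_map]
  rfl

end FiniteFamilies

section KoszulCumulant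

variable {γ : Type*} [DecidableEq γ] {R S : Type*} [CommRing R] [CommRing S]

theorem sum_setPartitions_koszulOn {F : Type*} [FunLike F S S] [AddMonoidHomClass F S S] (D : F)
    (κ : Finset γ → S) (Y : Finset γ) :
    ∑ P ∈ setPartitions Y, koszulOn D κ P =
      ∑ W ∈ Y.powerset with W.Nonempty,
        D (partitionSum (fun _ => 1) κ W) * partitionSum (fun k => (-1) ^ k) κ (Y \ W) := by
  have hexpand : ∀ P : Finset (Finset γ), koszulOn D κ P = ∑ R ∈ P.powerset,
      if R.Nonempty then (-1 : ℤ) ^ (P \ R).card • (D (∏ s ∈ R, κ s) * ∏ s ∈ P \ R, κ s)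
      else 0 := fun P => by
    rw [koszulOn, sum_filter]
    exact sum_congr rfl fun R hR => by rw [card_sdiff_of_subset (mem_powerset.1 hR)]
  simp_rw [hexpand]
  rw [sum_setPartitions_sum_powerset Y fun R Q =>
    if R.Nonempty then (-1 : ℤ) ^ Q.card • (D (∏ s ∈ R, κ s) * ∏ s ∈ Q, κ s) else 0, sum_filter]
  refine sum_congr rfl fun W _ => ?_
  rcases W.eq_empty_or_nonempty with rfl | hW
  · simp [setPartitions_empty]
  simp only [if_pos hW, partitionSum, one_smul, map_sum, sum_mul_sum]
  refine sum_congr rfl fun R hR => sum_congr rfl fun Q _ => ?_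
  rw [if_pos (nonempty_of_mem_setPartitions hW hR), mul_smul_comm]

theorem map_koszulOn_mul_prod {F₁ F₂ : Type*} [FunLike F₁ R S] [AddMonoidHomClass F₁ R S]
    [FunLike F₂ R R] [AddMonoidHomClass F₂ R R] (f : F₁) (Δ : F₂) (a : γ → R) {T U : Finset γ}
    (hTU : Disjoint T U) :
    f (koszulOn Δ a T * ∏ i ∈ U, a i) = ∑ V ∈ T.powerset,
      if V.Nonempty then (-1 : ℤ) ^ (T \ V).card • f (Δ (∏ i ∈ V, a i) * ∏ i ∈ (T \ V) ∪ U, a i)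
      else 0 := by
  rw [koszulOn, sum_mul, map_sum, sum_filter]
  refine sum_congr rfl fun V hV => ?_
  split_ifs
  · rw [smul_mul_assoc, map_zsmul, mul_assoc, card_sdiff_of_subset (mem_powerset.1 hV),
      ← prod_union (disjoint_of_subset_left sdiff_subset hTU)]
  · simp

theorem sum_powerset_setConv_koszulOn {F₁ F₂ : Type*} [FunLike F₁ R S] [AddMonoidHomClass F₁ R S]
    [FunLike F₂ R R] [AddMonoidHomClass F₂ R R] (f : F₁) (Δ : F₂) (a : γ → R)
    (ψ : Finset γ → S) (Y : Finset γ) :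
    ∑ T ∈ Y.powerset, setConv (fun U => f (koszulOn Δ a T * ∏ i ∈ U, a i)) ψ (Y \ T) =
      ∑ V ∈ Y.powerset with V.Nonempty, f (Δ (∏ i ∈ V, a i)) * ψ (Y \ V) := by
  obtain ⟨g, hg⟩ : ∃ g : Finset γ → Finset γ → Finset γ → S,
      ∀ V W Z, g V W Z = f (Δ (∏ i ∈ V, a i) * ∏ i ∈ W, a i) * ψ Z := ⟨_, fun _ _ _ => rfl⟩
  have hexpand : ∀ T ∈ Y.powerset, ∀ U ∈ (Y \ T).powerset,
      f (koszulOn Δ a T * ∏ i ∈ U, a i) * ψ ((Y \ T) \ U) = ∑ V ∈ T.powerset,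
        if V.Nonempty then (-1 : ℤ) ^ (T \ V).card •
          g V ((T \ V) ∪ U) (((Y \ V) \ (T \ V)) \ U) else 0 := by
    intro T _ U hU
    rw [map_koszulOn_mul_prod f Δ a (disjoint_of_subset_right (mem_powerset.1 hU) disjoint_sdiff),
      sum_mul]
    refine sum_congr rfl fun V hV => ?_
    split_ifs
    · rw [hg, smul_mul_assoc, sdiff_sdiff_sdiff_cancel_right (mem_powerset.1 hV)]
    · simp
  calc _ = ∑ T ∈ Y.powerset, ∑ V ∈ T.powerset, ∑ U ∈ ((Y \ V) \ (T \ V)).powerset,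
        if V.Nonempty then (-1 : ℤ) ^ (T \ V).card •
          g V ((T \ V) ∪ U) (((Y \ V) \ (T \ V)) \ U) else 0 := by
        refine sum_congr rfl fun T hT => ?_
        rw [setConv, sum_congr rfl (hexpand T hT), sum_comm]
        refine sum_congr rfl fun V hV => ?_
        rw [sdiff_sdiff_sdiff_cancel_right (mem_powerset.1 hV)]
    _ = ∑ V ∈ Y.powerset, ∑ X ∈ (Y \ V).powerset, ∑ U ∈ ((Y \ V) \ X).powerset,
        if V.Nonempty then (-1 : ℤ) ^ X.card • g V (X ∪ U) (((Y \ V) \ X) \ U) else 0 :=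
        (sum_powerset_sum_powerset_sdiff Y fun V X => ∑ U ∈ ((Y \ V) \ X).powerset,
          if V.Nonempty then (-1 : ℤ) ^ X.card • g V (X ∪ U) (((Y \ V) \ X) \ U) else 0).symm
    _ = ∑ V ∈ Y.powerset, if V.Nonempty then g V ∅ (Y \ V) else 0 := by
        refine sum_congr rfl fun V _ => ?_
        split_ifs
        · exact sum_powerset_neg_one_pow_smul (Y \ V) (g V)
        · simp
    _ = _ := by simp [hg, sum_filter]

end KoszulCumulant

theorem sum_Icc_sum_powerset_card {γ M : Type*} [AddCommMonoid M] {n : ℕ} (Y : Finset γ)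
    (hY : Y.card = n) (g : Finset γ → M) (hg : g ∅ = 0) :
    ∑ i ∈ Icc 1 n, ∑ S ∈ Y.powerset with S.card = i, g S = ∑ S ∈ Y.powerset, g S := by
  have hempty : ∑ S ∈ Y.powerset with S.card = 0, g S = 0 :=
    sum_eq_zero fun S hS => by rw [card_eq_zero.1 (mem_filter.1 hS).2, hg]
  rw [← sum_fiberwise_of_maps_to (g := card) (t := range (n + 1)) fun S hS =>
      mem_range.2 (Nat.lt_succ_of_le (hY ▸ card_le_card (mem_powerset.1 hS))),
    range_eq_Ico, sum_eq_sum_Ico_succ_bot n.succ_pos, hempty, zero_add]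
  rfl

theorem cumulants_intertwine_koszul_general (K A B : Type*) [Field K]
    [CommRing A] [Algebra K A] [CommRing B] [Algebra K B]
    (Δ : A →ₗ[K] A) (Δ' : B →ₗ[K] B) (f : A →ₗ[K] B)
    (hf : f 1 = 1)
    (hcomm : ∀ a : A, f (Δ a) = Δ' (f a)) :
    ∀ (n : ℕ), 1 ≤ n → ∀ a : Fin n → A,
      (∑ i ∈ Finset.Icc 1 n,
        ∑ S ∈ (Finset.univ : Finset (Fin n)).powerset.filter fun S => S.card = i,
          cumul (⇑f) (Sᶜ.card + 1)
            (Fin.cons (koszul (⇑Δ) S.card (restr a S)) (restr a Sᶜ))) =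
      ∑ P ∈ partitionsOf n,
        koszul (⇑Δ') P.card fun j =>
          cumul (⇑f) ((P.equivFin.symm j).1.card) (restr a (P.equivFin.symm j).1) := by
  intro n _ a
  have hF : moment f a ∅ = 1 := by simp [moment, hf]
  have hkoszul (P : Finset (Finset (Fin n))) : (koszul Δ' P.card fun j =>
      cumul f ((P.equivFin.symm j).1.card) (restr a (P.equivFin.symm j).1)) =
      koszulOn Δ' (cumulant (moment f a)) P := by
    change koszul Δ' P.card (restr (fun s => cumul f s.card (restr a s)) P) = _
    rw [koszul_restr]
    simp only [cumul_restr]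
  simp_rw [koszul_restr, cumul_cons_restr, compl_eq_univ_sdiff, hkoszul]
  rw [sum_Icc_sum_powerset_card _ (card_fin n) _ (by simp [koszulOn, setConv, filter_singleton]),
    sum_powerset_setConv_koszulOn, partitionsOf_eq_setPartitions, sum_setPartitions_koszulOn,
    partitionSum_one_cumulant hF, partitionSum_neg_one_pow_cumulant hF]
  simp [moment, hcomm]

/-- if `f∘Δ = Δ′∘f` then `κ(f)∘K(Δ) = K(Δ′)∘κ(f)`, i.e. in Taylor coefficients:
`Σ_{i=1}^{n} Σ_{|S|=i} κ(f)_{n−i+1}(K(Δ)_i((a_s)_{s∈S}),(a_j)_{j∉S})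
 = Σ_{partitions} K(Δ′)_k(κ(f)_{|I_1|}(…),…,κ(f)_{|I_k|}(…))`. -/
theorem cumulants_intertwine_koszul (K A B : Type*) [Field K] [CharZero K]
    [CommRing A] [Algebra K A] [CommRing B] [Algebra K B]
    (Δ : A →ₗ[K] A) (Δ' : B →ₗ[K] B) (f : A →ₗ[K] B)
    (hΔ : Δ 1 = 0) (hΔ' : Δ' 1 = 0) (hf : f 1 = 1)
    (hcomm : ∀ a : A, f (Δ a) = Δ' (f a)) :
    ∀ (n : ℕ), 1 ≤ n → ∀ a : Fin n → A,
      (∑ i ∈ Finset.Icc 1 n,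
        ∑ S ∈ (Finset.univ : Finset (Fin n)).powerset.filter fun S => S.card = i,
          cumul (⇑f) (Sᶜ.card + 1)
            (Fin.cons (koszul (⇑Δ) S.card (restr a S)) (restr a Sᶜ))) =
      ∑ P ∈ partitionsOf n,
        koszul (⇑Δ') P.card fun j =>
          cumul (⇑f) ((P.equivFin.symm j).1.card) (restr a (P.equivFin.symm j).1) :=
  cumulants_intertwine_koszul_general K A B Δ Δ' f hf hcomm
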